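/- arXiv:1007.5361 — 7 statements merged into one kernel-verified Lean document; each statement's English description precedes it below -/
import Mathlib

section
/- Let m, a, Q, Λ be positive real numbers, let r_e and r_c be real numbers with 0 < r_e < r_c such that Δ(r_e) = 0 and Δ(r_c) = 0 where Δ(r) = (r²+a²)(1 − Λr²/3) − 2mr + Q². For a horizon radius r₀ ∈ {r_e, r_c} set η² = r₀² + a², β² = a²/η², χ = 1 + Λa²/3, ξ = (Λa²/3)/χ, and define the traces γ₀(r₀) = η²[(1−β²) + (ξ−β²)g(ξ)] and γ₁(r₀) = η²(1−ξ), where g(ξ) = (√((1−ξ)/ξ)·arctan(√(ξ/(1−ξ))) − 1)/ξ. Writing γ₀ᵉ = γ₀(r_e), γ₁ᵉ = γ₁(r_e), γ₀ᶜ = γ₀(r_c), γ₁ᶜ = γ₁(r_c), one has γ₁ᶜγ₀ᵉ − γ₁ᵉγ₀ᶜ ≠ 0 and Λ = 3(γ₀ᵉ − γ₁ᵉ + γ₁ᶜ − γ₀ᶜ)/(γ₁ᶜγ₀ᵉ − γ₁ᵉγ₀ᶜ). -/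
/-!
Both traces are affine in `η² = r₀² + a²`: `γ₀ = η² (1 + ξ g) - a² (1 + g)` and `γ₁ = η² (1 - ξ)`.
Hence `γ₁ᶜγ₀ᵉ - γ₁ᵉγ₀ᶜ = (1 - ξ) a² (1 + g) (r_e² - r_c²)` and
`γ₀ᵉ - γ₁ᵉ + γ₁ᶜ - γ₀ᶜ = ξ (1 + g) (r_e² - r_c²)`, whose ratio is `ξ / ((1 - ξ) a²) = Λ / 3`.
The determinant is nonzero because `1 + g(ξ) > 0`, which with `t = √(ξ / (1 - ξ))` is the
inequality `arctan t > t / (1 + t²)`.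
-/

/-- The function `g(ξ) = (√((1−ξ)/ξ)·arctan(√(ξ/(1−ξ))) − 1)/ξ`. -/
noncomputable def gfun (ξ : ℝ) : ℝ :=
  (Real.sqrt ((1 - ξ) / ξ) * Real.arctan (Real.sqrt (ξ / (1 - ξ))) - 1) / ξ

open Real

/-- `t / (1 + t²) = sin θ cos θ = sin (2θ) / 2` for `θ = arctan t`. -/
theorem Real.div_one_add_sq_lt_arctan {t : ℝ} (ht : 0 < t) : t / (1 + t ^ 2) < arctan t := by
  have hsincos : sin (arctan t) * cos (arctan t) = t / (1 + t ^ 2) := by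
    rw [sin_arctan, cos_arctan, div_mul_div_comm, mul_one, mul_self_sqrt (by positivity)]
  have hsin := sin_lt (mul_pos two_pos (arctan_pos.mpr ht))
  rw [sin_two_mul, mul_assoc, hsincos] at hsin
  linarith

theorem one_add_gfun_pos {ξ : ℝ} (h0 : 0 < ξ) (h1 : ξ < 1) : 0 < 1 + gfun ξ := by
  have h1ξ : 0 < 1 - ξ := by linarith
  set t := √(ξ / (1 - ξ)) with ht
  have htpos : 0 < t := sqrt_pos.mpr (div_pos h0 h1ξ)
  have hinv : √((1 - ξ) / ξ) = t⁻¹ := by rw [ht, ← sqrt_inv, inv_div]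
  have hone : 1 - ξ = 1 / (1 + t ^ 2) := by
    rw [ht, sq_sqrt (div_pos h0 h1ξ).le]; field_simp; ring
  have harctan : 1 - ξ < t⁻¹ * arctan t := by
    rw [hone, inv_mul_eq_div, lt_div_iff₀ htpos, one_div_mul_eq_div]
    exact div_one_add_sq_lt_arctan htpos
  have hξg : ξ * (1 + gfun ξ) = t⁻¹ * arctan t - (1 - ξ) := by
    rw [gfun, hinv]; field_simp; ring
  exact pos_of_mul_pos_right (hξg ▸ sub_pos.mpr harctan) h0.le

theorem trace_eq_affine {η2 : ℝ} (b ξ g : ℝ) (hη : η2 ≠ 0) :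
    η2 * ((1 - b / η2) + (ξ - b / η2) * g) = η2 * (1 + ξ * g) - b * (1 + g) := by
  field_simp; ring

theorem stmt_0_general (a Λ re rc : ℝ)
    (ha : 0 < a) (hΛ : 0 < Λ)
    (hre : 0 < re) (hlt : re < rc)
    (χ ξ γ0e γ1e γ0c γ1c : ℝ)
    (hχ : χ = 1 + Λ * a ^ 2 / 3)
    (hξ : ξ = (Λ * a ^ 2 / 3) / χ)
    (hγ0e : γ0e = (re ^ 2 + a ^ 2) *
      ((1 - a ^ 2 / (re ^ 2 + a ^ 2)) + (ξ - a ^ 2 / (re ^ 2 + a ^ 2)) * gfun ξ))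
    (hγ1e : γ1e = (re ^ 2 + a ^ 2) * (1 - ξ))
    (hγ0c : γ0c = (rc ^ 2 + a ^ 2) *
      ((1 - a ^ 2 / (rc ^ 2 + a ^ 2)) + (ξ - a ^ 2 / (rc ^ 2 + a ^ 2)) * gfun ξ))
    (hγ1c : γ1c = (rc ^ 2 + a ^ 2) * (1 - ξ)) :
    γ1c * γ0e - γ1e * γ0c ≠ 0 ∧
      Λ = 3 * (γ0e - γ1e + γ1c - γ0c) / (γ1c * γ0e - γ1e * γ0c) := by
  have hχpos : 0 < χ := hχ ▸ by positivity
  have hξpos : 0 < ξ := hξ ▸ by positivity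
  have hξlt : ξ < 1 := hξ ▸ (div_lt_one hχpos).mpr (by linarith)
  have hξΛ : (1 - ξ) * (Λ * a ^ 2 / 3) = ξ := by rw [hξ, hχ]; field_simp; ring
  rw [trace_eq_affine _ _ _ (by positivity)] at hγ0e hγ0c
  have hD : γ1c * γ0e - γ1e * γ0c = (1 - ξ) * a ^ 2 * (1 + gfun ξ) * (re ^ 2 - rc ^ 2) := by
    rw [hγ0e, hγ1e, hγ0c, hγ1c]; ring
  have hN : γ0e - γ1e + γ1c - γ0c = ξ * (1 + gfun ξ) * (re ^ 2 - rc ^ 2) := by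
    rw [hγ0e, hγ1e, hγ0c, hγ1c]; ring
  have hDne : γ1c * γ0e - γ1e * γ0c ≠ 0 := by
    rw [hD]
    have hg := one_add_gfun_pos hξpos hξlt
    have hsq : re ^ 2 < rc ^ 2 := by gcongr
    apply mul_ne_zero <;> [positivity; linarith]
  refine ⟨hDne, ?_⟩
  rw [eq_div_iff hDne, hD, hN]
  linear_combination 3 * (1 + gfun ξ) * (re ^ 2 - rc ^ 2) * hξΛ

/-- Spectral formula for the cosmological constant of a Kerr-Newman de Sitter space-time. -/
theorem stmt_0 (m a Q Λ re rc : ℝ)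
    (hm : 0 < m) (ha : 0 < a) (hQ : 0 < Q) (hΛ : 0 < Λ)
    (hre : 0 < re) (hlt : re < rc)
    (hΔe : (re ^ 2 + a ^ 2) * (1 - Λ * re ^ 2 / 3) - 2 * m * re + Q ^ 2 = 0)
    (hΔc : (rc ^ 2 + a ^ 2) * (1 - Λ * rc ^ 2 / 3) - 2 * m * rc + Q ^ 2 = 0)
    (χ ξ γ0e γ1e γ0c γ1c : ℝ)
    (hχ : χ = 1 + Λ * a ^ 2 / 3)
    (hξ : ξ = (Λ * a ^ 2 / 3) / χ)
    (hγ0e : γ0e = (re ^ 2 + a ^ 2) *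
      ((1 - a ^ 2 / (re ^ 2 + a ^ 2)) + (ξ - a ^ 2 / (re ^ 2 + a ^ 2)) * gfun ξ))
    (hγ1e : γ1e = (re ^ 2 + a ^ 2) * (1 - ξ))
    (hγ0c : γ0c = (rc ^ 2 + a ^ 2) *
      ((1 - a ^ 2 / (rc ^ 2 + a ^ 2)) + (ξ - a ^ 2 / (rc ^ 2 + a ^ 2)) * gfun ξ))
    (hγ1c : γ1c = (rc ^ 2 + a ^ 2) * (1 - ξ)) :
    γ1c * γ0e - γ1e * γ0c ≠ 0 ∧
      Λ = 3 * (γ0e - γ1e + γ1c - γ0c) / (γ1c * γ0e - γ1e * γ0c) :=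
  stmt_0_general a Λ re rc ha hΛ hre hlt χ ξ γ0e γ1e γ0c γ1c hχ hξ hγ0e hγ1e hγ0c hγ1c
end

section
/- Let (m, a, Q, Λ) and (m', a', Q', Λ') be two quadruples of positive real numbers, with horizon radii 0 < r_e < r_c satisfying Δ(r_e) = Δ(r_c) = 0 for Δ(r) = (r²+a²)(1 − Λr²/3) − 2mr + Q², and 0 < r_e' < r_c' satisfying Δ'(r_e') = Δ'(r_c') = 0 for Δ'(r) = (r²+a'²)(1 − Λ'r²/3) − 2m'r + Q'². Define for each quadruple and each horizon radius the trace quantities γ₀(r₀) = η²[(1−β²) + (ξ−β²)g(ξ)] and γ₁(r₀) = η²(1−ξ) (with η² = r₀²+a², β² = a²/η², ξ = (Λa²/3)/(1+Λa²/3), g(ξ) = (√((1−ξ)/ξ)·arctan(√(ξ/(1−ξ))) − 1)/ξ, and the primed analogues). If γ₀(r_e) = γ₀'(r_e'), γ₁(r_e) = γ₁'(r_e'), γ₀(r_c) = γ₀'(r_c'), and γ₁(r_c) = γ₁'(r_c'), then m = m', a = a', Q = Q', Λ = Λ', r_e = r_e', and r_c = r_c'. (The Kerr-Newman de Sitter space-time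 is uniquely determined by the union of the spectra of the event and cosmological horizons.) -/
/-- The parameter `ξ = (Λa²/3)/(1+Λa²/3)`. -/
noncomputable def xiOf (Λ a : ℝ) : ℝ := (Λ * a ^ 2 / 3) / (1 + Λ * a ^ 2 / 3)

/-- The trace `γ₀(r₀) = η²[(1−β²) + (ξ−β²)g(ξ)]` with `η² = r₀²+a²`, `β² = a²/η²`. -/
noncomputable def gamma0 (Λ a r₀ : ℝ) : ℝ :=
  (r₀ ^ 2 + a ^ 2) * ((1 - a ^ 2 / (r₀ ^ 2 + a ^ 2)) +
    (xiOf Λ a - a ^ 2 / (r₀ ^ 2 + a ^ 2)) * gfun (xiOf Λ a))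

/-- The trace `γ₁(r₀) = η²(1−ξ)` with `η² = r₀²+a²`. -/
noncomputable def gamma1 (Λ a r₀ : ℝ) : ℝ := (r₀ ^ 2 + a ^ 2) * (1 - xiOf Λ a)

open Real Set

lemma strictAntiOn_sin_div_self : StrictAntiOn (fun x => sin x / x) (Ioc 0 π) := by
  intro x hx y hy hxy
  have key := strictConcaveOn_sin_Icc.secant_strict_mono (a := 0) ⟨le_rfl, pi_pos.le⟩
    (Ioc_subset_Icc_self hx) (Ioc_subset_Icc_self hy) hx.1.ne' hy.1.ne' hxy
  simpa only [sin_zero, sub_zero] using key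

noncomputable def xiAngle (ξ : ℝ) : ℝ := arctan √(ξ / (1 - ξ))

section xiAngle

variable {ξ : ℝ}

lemma xiAngle_pos (h0 : 0 < ξ) (h1 : ξ < 1) : 0 < xiAngle ξ :=
  arctan_pos.2 (sqrt_pos.2 (div_pos h0 (sub_pos.2 h1)))

lemma xiAngle_lt_pi_div_two : xiAngle ξ < π / 2 := arctan_lt_pi_div_two _

lemma sin_xiAngle_pos (h0 : 0 < ξ) (h1 : ξ < 1) : 0 < sin (xiAngle ξ) :=
  sin_arctan_pos.2 (sqrt_pos.2 (div_pos h0 (sub_pos.2 h1)))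

lemma one_add_sq_sqrt_div (h0 : 0 ≤ ξ) (h1 : ξ < 1) : 1 + √(ξ / (1 - ξ)) ^ 2 = (1 - ξ)⁻¹ := by
  have : 1 - ξ ≠ 0 := (sub_pos.2 h1).ne'
  rw [sq_sqrt (div_nonneg h0 (sub_pos.2 h1).le)]
  field_simp
  ring

lemma sin_sq_xiAngle (h0 : 0 ≤ ξ) (h1 : ξ < 1) : sin (xiAngle ξ) ^ 2 = ξ := by
  rw [xiAngle, sin_sq_arctan, one_add_sq_sqrt_div h0 h1,
    sq_sqrt (div_nonneg h0 (sub_pos.2 h1).le), div_inv_eq_mul, div_mul_cancel₀ _ (sub_pos.2 h1).ne']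

lemma cos_sq_xiAngle (h0 : 0 ≤ ξ) (h1 : ξ < 1) : cos (xiAngle ξ) ^ 2 = 1 - ξ := by
  rw [xiAngle, cos_sq_arctan, one_add_sq_sqrt_div h0 h1, one_div, inv_inv]

lemma one_add_mul_gfun (h0 : 0 < ξ) (h1 : ξ < 1) :
    1 + ξ * gfun ξ = xiAngle ξ * cos (xiAngle ξ) / sin (xiAngle ξ) := by
  have hcot : cos (xiAngle ξ) / sin (xiAngle ξ) = √((1 - ξ) / ξ) := by
    rw [xiAngle, cos_arctan, sin_arctan, div_div_div_cancel_right₀ (by positivity), one_div,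
      ← sqrt_inv, inv_div]
  rw [mul_div_assoc, hcot, gfun, mul_div_cancel₀ _ h0.ne', xiAngle, mul_comm]
  ring

lemma gfun_gt_neg_one (h0 : 0 < ξ) (h1 : ξ < 1) : -1 < gfun ξ := by
  set θ := xiAngle ξ
  have hθ : 0 < θ := xiAngle_pos h0 h1
  have hsin : 0 < sin θ := sin_xiAngle_pos h0 h1
  have hcos : 0 < cos θ := cos_arctan_pos _
  -- `1 + ξ g(ξ) = θ cot θ > cos² θ = 1 - ξ`, since `sin θ cos θ ≤ sin θ < θ`
  have key : 1 - ξ < 1 + ξ * gfun ξ := by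
    rw [one_add_mul_gfun h0 h1, ← cos_sq_xiAngle h0.le h1, lt_div_iff₀ hsin]
    nlinarith [sin_lt hθ, cos_le_one θ, mul_pos hcos hsin]
  nlinarith

lemma one_sub_div_one_add_mul_gfun (h0 : 0 < ξ) (h1 : ξ < 1) :
    (1 - ξ) / (1 + ξ * gfun ξ) = sin (2 * xiAngle ξ) / (2 * xiAngle ξ) := by
  have hθ : 0 < xiAngle ξ := xiAngle_pos h0 h1
  have hsin : 0 < sin (xiAngle ξ) := sin_xiAngle_pos h0 h1
  have hcos : 0 < cos (xiAngle ξ) := cos_arctan_pos _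
  rw [one_add_mul_gfun h0 h1, ← cos_sq_xiAngle h0.le h1, sin_two_mul]
  field_simp

end xiAngle

lemma injOn_one_sub_div_one_add_mul_gfun :
    InjOn (fun ξ => (1 - ξ) / (1 + ξ * gfun ξ)) (Ioo 0 1) := by
  intro ξ₁ ⟨h0₁, h1₁⟩ ξ₂ ⟨h0₂, h1₂⟩ h
  have hmem {ξ : ℝ} (h0 : 0 < ξ) (h1 : ξ < 1) : 2 * xiAngle ξ ∈ Ioc 0 π :=
    ⟨by linarith [xiAngle_pos h0 h1], by linarith [xiAngle_lt_pi_div_two (ξ := ξ)]⟩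
  simp only [one_sub_div_one_add_mul_gfun h0₁ h1₁, one_sub_div_one_add_mul_gfun h0₂ h1₂] at h
  have hθ : xiAngle ξ₁ = xiAngle ξ₂ := by
    linarith [strictAntiOn_sin_div_self.injOn (hmem h0₁ h1₁) (hmem h0₂ h1₂) h]
  rw [← sin_sq_xiAngle h0₁.le h1₁, ← sin_sq_xiAngle h0₂.le h1₂, hθ]

lemma xiOf_mem_Ioo {Λ a : ℝ} (hΛ : 0 < Λ) (ha : a ≠ 0) : xiOf Λ a ∈ Ioo 0 1 := by
  have hu : 0 < Λ * a ^ 2 / 3 := by positivity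
  exact ⟨div_pos hu (by linarith), (div_lt_one (by linarith)).2 (by linarith)⟩

lemma eq_of_xiOf_eq_xiOf {Λ Λ' a : ℝ} (hΛ : 0 ≤ Λ) (hΛ' : 0 ≤ Λ') (ha : a ≠ 0)
    (h : xiOf Λ a = xiOf Λ' a) : Λ = Λ' := by
  have hu : 0 < 1 + Λ * a ^ 2 / 3 := by positivity
  have hu' : 0 < 1 + Λ' * a ^ 2 / 3 := by positivity
  rw [xiOf, xiOf, div_eq_div_iff hu.ne' hu'.ne'] at h
  exact mul_right_cancel₀ (pow_ne_zero 2 ha) (by linear_combination 3 * h)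

lemma gamma0_eq (Λ a r : ℝ) :
    gamma0 Λ a r = r ^ 2 + ((r ^ 2 + a ^ 2) * xiOf Λ a - a ^ 2) * gfun (xiOf Λ a) := by
  by_cases hη : r ^ 2 + a ^ 2 = 0
  · have ha : a ^ 2 = 0 := by nlinarith [sq_nonneg r, sq_nonneg a]
    have hr : r ^ 2 = 0 := by nlinarith [sq_nonneg r, sq_nonneg a]
    simp [gamma0, ha, hr]
  · unfold gamma0
    field_simp
    ring

lemma gamma0_sub_gamma0 (Λ a r₁ r₂ : ℝ) :
    gamma0 Λ a r₂ - gamma0 Λ a r₁ = (r₂ ^ 2 - r₁ ^ 2) * (1 + xiOf Λ a * gfun (xiOf Λ a)) := by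
  rw [gamma0_eq, gamma0_eq]
  ring

lemma gamma1_sub_gamma1 (Λ a r₁ r₂ : ℝ) :
    gamma1 Λ a r₂ - gamma1 Λ a r₁ = (r₂ ^ 2 - r₁ ^ 2) * (1 - xiOf Λ a) := by
  unfold gamma1
  ring

lemma xiOf_eq_of_gamma_eq {Λ a r₁ r₂ Λ' a' r₁' r₂' : ℝ} (hΛ : 0 < Λ) (ha : a ≠ 0)
    (hΛ' : 0 < Λ') (ha' : a' ≠ 0) (hr : r₁ ^ 2 ≠ r₂ ^ 2)
    (h0₁ : gamma0 Λ a r₁ = gamma0 Λ' a' r₁') (h1₁ : gamma1 Λ a r₁ = gamma1 Λ' a' r₁')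
    (h0₂ : gamma0 Λ a r₂ = gamma0 Λ' a' r₂') (h1₂ : gamma1 Λ a r₂ = gamma1 Λ' a' r₂') :
    xiOf Λ a = xiOf Λ' a' := by
  have hξ := xiOf_mem_Ioo hΛ ha
  have hξ' := xiOf_mem_Ioo hΛ' ha'
  have hD : r₂ ^ 2 - r₁ ^ 2 ≠ 0 := sub_ne_zero.2 hr.symm
  have E1 : (r₂ ^ 2 - r₁ ^ 2) * (1 - xiOf Λ a) = (r₂' ^ 2 - r₁' ^ 2) * (1 - xiOf Λ' a') := by
    rw [← gamma1_sub_gamma1, ← gamma1_sub_gamma1, h1₁, h1₂]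
  have E0 : (r₂ ^ 2 - r₁ ^ 2) * (1 + xiOf Λ a * gfun (xiOf Λ a)) =
      (r₂' ^ 2 - r₁' ^ 2) * (1 + xiOf Λ' a' * gfun (xiOf Λ' a')) := by
    rw [← gamma0_sub_gamma0, ← gamma0_sub_gamma0, h0₁, h0₂]
  have hD' : r₂' ^ 2 - r₁' ^ 2 ≠ 0 := by
    rintro hD'
    rw [hD', zero_mul] at E1
    exact mul_ne_zero hD (sub_pos.2 hξ.2).ne' E1
  refine injOn_one_sub_div_one_add_mul_gfun hξ hξ' ?_
  simp only
  rw [← mul_div_mul_left _ _ hD, E1, E0, mul_div_mul_left _ _ hD']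

lemma sq_eq_sq_of_gamma_eq {Λ a r Λ' a' r' : ℝ} (hξ : xiOf Λ a = xiOf Λ' a')
    (hξ1 : xiOf Λ a ≠ 1) (hg : gfun (xiOf Λ a) ≠ -1)
    (h0 : gamma0 Λ a r = gamma0 Λ' a' r') (h1 : gamma1 Λ a r = gamma1 Λ' a' r') :
    a ^ 2 = a' ^ 2 ∧ r ^ 2 = r' ^ 2 := by
  rw [gamma0_eq, gamma0_eq, ← hξ] at h0
  rw [gamma1, gamma1, ← hξ] at h1
  have hη : r ^ 2 + a ^ 2 = r' ^ 2 + a' ^ 2 := mul_right_cancel₀ (sub_ne_zero.2 hξ1.symm) h1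
  have ha : a ^ 2 = a' ^ 2 := by
    refine mul_left_cancel₀ (fun h => hg (by linarith) : 1 + gfun (xiOf Λ a) ≠ 0) ?_
    linear_combination (1 + xiOf Λ a * gfun (xiOf Λ a)) * hη - h0
  exact ⟨ha, by linear_combination hη - ha⟩

noncomputable def horizonFunction (m a Q Λ r : ℝ) : ℝ :=
  (r ^ 2 + a ^ 2) * (1 - Λ * r ^ 2 / 3) - 2 * m * r + Q ^ 2

lemma eq_of_horizonFunction_eq_zero {m Q m' Q' a Λ r₁ r₂ : ℝ} (hr : r₁ ≠ r₂)
    (h₁ : horizonFunction m a Q Λ r₁ = 0) (h₂ : horizonFunction m a Q Λ r₂ = 0)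
    (h₁' : horizonFunction m' a Q' Λ r₁ = 0) (h₂' : horizonFunction m' a Q' Λ r₂ = 0) :
    m = m' ∧ Q ^ 2 = Q' ^ 2 := by
  unfold horizonFunction at *
  have hprod : (m - m') * (r₁ - r₂) = 0 := by linear_combination (h₁' - h₂' - h₁ + h₂) / 2
  have hm : m = m' := sub_eq_zero.1 ((mul_eq_zero.1 hprod).resolve_right (sub_ne_zero.2 hr))
  subst hm
  exact ⟨rfl, by linear_combination h₁ - h₁'⟩

theorem stmt_1_general (m a Q Λ re rc m' a' Q' Λ' re' rc' : ℝ)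
    (ha : 0 < a) (hQ : 0 < Q) (hΛ : 0 < Λ)
    (ha' : 0 < a') (hQ' : 0 < Q') (hΛ' : 0 < Λ')
    (hre : 0 < re) (hlt : re < rc) (hre' : 0 < re') (hlt' : re' < rc')
    (hΔe : (re ^ 2 + a ^ 2) * (1 - Λ * re ^ 2 / 3) - 2 * m * re + Q ^ 2 = 0)
    (hΔc : (rc ^ 2 + a ^ 2) * (1 - Λ * rc ^ 2 / 3) - 2 * m * rc + Q ^ 2 = 0)
    (hΔe' : (re' ^ 2 + a' ^ 2) * (1 - Λ' * re' ^ 2 / 3) - 2 * m' * re' + Q' ^ 2 = 0)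
    (hΔc' : (rc' ^ 2 + a' ^ 2) * (1 - Λ' * rc' ^ 2 / 3) - 2 * m' * rc' + Q' ^ 2 = 0)
    (h0e : gamma0 Λ a re = gamma0 Λ' a' re')
    (h1e : gamma1 Λ a re = gamma1 Λ' a' re')
    (h0c : gamma0 Λ a rc = gamma0 Λ' a' rc')
    (h1c : gamma1 Λ a rc = gamma1 Λ' a' rc') :
    m = m' ∧ a = a' ∧ Q = Q' ∧ Λ = Λ' ∧ re = re' ∧ rc = rc' := by
  have hξ := xiOf_eq_of_gamma_eq hΛ ha.ne' hΛ' ha'.ne'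
    (pow_lt_pow_left₀ hlt hre.le two_ne_zero).ne h0e h1e h0c h1c
  obtain ⟨hξ0, hξ1⟩ := xiOf_mem_Ioo hΛ ha.ne'
  have hg := (gfun_gt_neg_one hξ0 hξ1).ne'
  obtain ⟨ha2, hre2⟩ := sq_eq_sq_of_gamma_eq hξ hξ1.ne hg h0e h1e
  obtain ⟨-, hrc2⟩ := sq_eq_sq_of_gamma_eq hξ hξ1.ne hg h0c h1c
  obtain rfl : a = a' := (pow_left_inj₀ ha.le ha'.le two_ne_zero).1 ha2
  obtain rfl : re = re' := (pow_left_inj₀ hre.le hre'.le two_ne_zero).1 hre2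
  obtain rfl : rc = rc' :=
    (pow_left_inj₀ (hre.trans hlt).le (hre'.trans hlt').le two_ne_zero).1 hrc2
  obtain rfl : Λ = Λ' := eq_of_xiOf_eq_xiOf hΛ.le hΛ'.le ha.ne' hξ
  obtain ⟨rfl, hQ2⟩ := eq_of_horizonFunction_eq_zero hlt.ne hΔe hΔc hΔe' hΔc'
  exact ⟨rfl, rfl, (pow_left_inj₀ hQ.le hQ'.le two_ne_zero).1 hQ2, rfl, rfl, rfl⟩

/-- The Kerr-Newman de Sitter space-time is uniquely determined by the union of the spectra
of the event and cosmological horizons. -/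
theorem stmt_1 (m a Q Λ re rc m' a' Q' Λ' re' rc' : ℝ)
    (hm : 0 < m) (ha : 0 < a) (hQ : 0 < Q) (hΛ : 0 < Λ)
    (hm' : 0 < m') (ha' : 0 < a') (hQ' : 0 < Q') (hΛ' : 0 < Λ')
    (hre : 0 < re) (hlt : re < rc) (hre' : 0 < re') (hlt' : re' < rc')
    (hΔe : (re ^ 2 + a ^ 2) * (1 - Λ * re ^ 2 / 3) - 2 * m * re + Q ^ 2 = 0)
    (hΔc : (rc ^ 2 + a ^ 2) * (1 - Λ * rc ^ 2 / 3) - 2 * m * rc + Q ^ 2 = 0)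
    (hΔe' : (re' ^ 2 + a' ^ 2) * (1 - Λ' * re' ^ 2 / 3) - 2 * m' * re' + Q' ^ 2 = 0)
    (hΔc' : (rc' ^ 2 + a' ^ 2) * (1 - Λ' * rc' ^ 2 / 3) - 2 * m' * rc' + Q' ^ 2 = 0)
    (h0e : gamma0 Λ a re = gamma0 Λ' a' re')
    (h1e : gamma1 Λ a re = gamma1 Λ' a' re')
    (h0c : gamma0 Λ a rc = gamma0 Λ' a' rc')
    (h1c : gamma1 Λ a rc = gamma1 Λ' a' rc') :
    m = m' ∧ a = a' ∧ Q = Q' ∧ Λ = Λ' ∧ re = re' ∧ rc = rc' :=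
  stmt_1_general m a Q Λ re rc m' a' Q' Λ' re' rc' ha hQ hΛ ha' hQ' hΛ' hre hlt hre' hlt' hΔe hΔc
    hΔe' hΔc' h0e h1e h0c h1c
end

section
/- Let β ∈ (0,1) and ξ ∈ [0,1), and let f(x) = (1 − ξ(1−x²))(1−x²)/(1 − β²(1−x²)). Then for every x ∈ (−1,1), −f''(x)/2 = ξ/β² + (1 − ξ/β²)·(1 − β²(1+3x²))/(1 − β²(1−x²))³. Consequently, the Gauss curvature K(x) = −f''(x)/(2η²(1−ξ)) of the horizon metric ds² = η²(1−ξ)((1/f(x))dx² + f(x)dφ²) equals (1/(η²(1−ξ)))·[ξ/β² + (1 − ξ/β²)(1 − β²(1+3x²))/(1 − β²(1−x²))³]. -/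
/-!
With `u = 1 - x²` and `D = 1 - β²u = (1 - β²) + β²x²`, substituting `u = (1 - D)/β²` splits
`f = (1 - ξu)u/D` into partial fractions
`f(x) = (β² - ξ)/β⁴ · D⁻¹ + const - (ξ/β²) x²`.
The quadratic term contributes `ξ/β²` to `-f''/2`, and `(D⁻¹)'' = 2β²(3β²x² - (1 - β²))/D³`
gives the second term.
-/

section InverseQuadratic

variable {b c : ℝ}

theorem hasDerivAt_quadratic (x : ℝ) :
    HasDerivAt (fun y => c + b * y ^ 2) (2 * b * x) x :=
  (((hasDerivAt_pow 2 x).const_mul b).const_add c).congr_deriv (by ring)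

theorem hasDerivAt_inv_quadratic {x : ℝ} (hx : c + b * x ^ 2 ≠ 0) :
    HasDerivAt (fun y => (c + b * y ^ 2)⁻¹) (-(2 * b * x) / (c + b * x ^ 2) ^ 2) x :=
  (hasDerivAt_quadratic x).fun_inv hx

theorem hasDerivAt_deriv_inv_quadratic {x : ℝ} (hx : c + b * x ^ 2 ≠ 0) :
    HasDerivAt (fun y => -(2 * b * y) / (c + b * y ^ 2) ^ 2)
      (2 * b * (3 * b * x ^ 2 - c) / (c + b * x ^ 2) ^ 3) x := by
  have hN : HasDerivAt (fun y => -(2 * b * y)) (-(2 * b)) x :=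
    ((hasDerivAt_id x).const_mul (2 * b)).fun_neg.congr_deriv (by ring)
  refine (hN.fun_div ((hasDerivAt_quadratic x).fun_pow 2) (pow_ne_zero 2 hx)).congr_deriv ?_
  field_simp
  ring

theorem deriv_deriv_partialFraction (h : ∀ y, c + b * y ^ 2 ≠ 0) (a k m x : ℝ) :
    deriv (deriv fun y => a * (c + b * y ^ 2)⁻¹ + k + m * y ^ 2) x =
      a * (2 * b * (3 * b * x ^ 2 - c) / (c + b * x ^ 2) ^ 3) + 2 * m := by
  have hfirst : deriv (fun y => a * (c + b * y ^ 2)⁻¹ + k + m * y ^ 2) =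
      fun y => a * (-(2 * b * y) / (c + b * y ^ 2) ^ 2) + 2 * m * y := by
    funext y
    exact ((((hasDerivAt_inv_quadratic (h y)).const_mul a).add_const k).fun_add
      ((hasDerivAt_pow 2 y).const_mul m)).congr_deriv (by ring) |>.deriv
  rw [hfirst]
  exact ((((hasDerivAt_deriv_inv_quadratic (h x)).const_mul a).fun_add
    ((hasDerivAt_id x).const_mul (2 * m))).congr_deriv (by ring)).deriv

end InverseQuadratic

theorem stmt_3_general (β ξ η2 : ℝ) (hβ0 : 0 < β) (hβ1 : β < 1)
    (f : ℝ → ℝ)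
    (hf : ∀ x, f x = (1 - ξ * (1 - x ^ 2)) * (1 - x ^ 2) / (1 - β ^ 2 * (1 - x ^ 2))) :
    ∀ x ∈ Set.Ioo (-1 : ℝ) 1,
      (-(deriv (deriv f) x) / 2 =
        ξ / β ^ 2 + (1 - ξ / β ^ 2) * (1 - β ^ 2 * (1 + 3 * x ^ 2)) /
          (1 - β ^ 2 * (1 - x ^ 2)) ^ 3) ∧
      (-(deriv (deriv f) x) / (2 * η2 * (1 - ξ)) =
        (1 / (η2 * (1 - ξ))) * (ξ / β ^ 2 + (1 - ξ / β ^ 2) * (1 - β ^ 2 * (1 + 3 * x ^ 2)) /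
          (1 - β ^ 2 * (1 - x ^ 2)) ^ 3)) := by
  intro x _
  have hβ : β ≠ 0 := hβ0.ne'
  have hD : ∀ y : ℝ, 1 - β ^ 2 + β ^ 2 * y ^ 2 ≠ 0 := fun y => by
    nlinarith [sq_nonneg (β * y)]
  have hf_eq : f = fun y => (β ^ 2 - ξ) / β ^ 4 * (1 - β ^ 2 + β ^ 2 * y ^ 2)⁻¹
      + (ξ + (ξ - 1) * β ^ 2) / β ^ 4 + -ξ / β ^ 2 * y ^ 2 := by
    funext y
    -- in the order `field_simp` normalizes the denominator to
    have hDy : 1 - β ^ 2 + y ^ 2 * β ^ 2 ≠ 0 := by rw [mul_comm]; exact hD y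
    rw [hf, show 1 - β ^ 2 * (1 - y ^ 2) = 1 - β ^ 2 + β ^ 2 * y ^ 2 by ring]
    field_simp
    ring
  have hcurv : -(deriv (deriv f) x) / 2 =
      ξ / β ^ 2 + (1 - ξ / β ^ 2) * (1 - β ^ 2 * (1 + 3 * x ^ 2)) /
        (1 - β ^ 2 * (1 - x ^ 2)) ^ 3 := by
    have hDx := hD x
    rw [hf_eq, deriv_deriv_partialFraction hD,
      show 1 - β ^ 2 * (1 - x ^ 2) = 1 - β ^ 2 + β ^ 2 * x ^ 2 by ring]
    field_simp
    ring
  refine ⟨hcurv, ?_⟩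
  rw [← hcurv]
  simp only [div_eq_mul_inv, mul_inv]
  ring

/-- Gauss curvature of the Kerr-Newman de Sitter horizon metric: with
`f(x) = (1 − ξ(1−x²))(1−x²)/(1 − β²(1−x²))`, for `x ∈ (−1,1)` one has
`−f''(x)/2 = ξ/β² + (1 − ξ/β²)(1 − β²(1+3x²))/(1 − β²(1−x²))³`, and consequently
`K(x) = −f''(x)/(2η²(1−ξ))` equals the displayed expression divided by `η²(1−ξ)`. -/
theorem stmt_3 (β ξ η2 : ℝ) (hβ0 : 0 < β) (hβ1 : β < 1) (hξ0 : 0 ≤ ξ) (hξ1 : ξ < 1)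
    (hη2 : 0 < η2)
    (f : ℝ → ℝ)
    (hf : ∀ x, f x = (1 - ξ * (1 - x ^ 2)) * (1 - x ^ 2) / (1 - β ^ 2 * (1 - x ^ 2))) :
    ∀ x ∈ Set.Ioo (-1 : ℝ) 1,
      (-(deriv (deriv f) x) / 2 =
        ξ / β ^ 2 + (1 - ξ / β ^ 2) * (1 - β ^ 2 * (1 + 3 * x ^ 2)) /
          (1 - β ^ 2 * (1 - x ^ 2)) ^ 3) ∧
      (-(deriv (deriv f) x) / (2 * η2 * (1 - ξ)) =
        (1 / (η2 * (1 - ξ))) * (ξ / β ^ 2 + (1 - ξ / β ^ 2) * (1 - β ^ 2 * (1 + 3 * x ^ 2)) /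
          (1 - β ^ 2 * (1 - x ^ 2)) ^ 3)) :=
  stmt_3_general β ξ η2 hβ0 hβ1 f hf
end

section
/- Let a, Λ > 0 and let r_e ≠ r_c be positive reals. Set ξ = (Λa²/3)/(1+Λa²/3), g(ξ) = (√((1−ξ)/ξ)·arctan(√(ξ/(1−ξ))) − 1)/ξ, h(ξ) = (1 + ξ·g(ξ))/(1 − ξ), and for r₀ ∈ {r_e, r_c} define η² = r₀²+a², β² = a²/η², γ₀(r₀) = η²[(1−β²) + (ξ−β²)g(ξ)], and γ₁(r₀) = η²(1−ξ). Then γ₁(r_e) ≠ γ₁(r_c) and (γ₀(r_e) − γ₀(r_c))/(γ₁(r_e) − γ₁(r_c)) = h(ξ). -/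
/-- The function `h(ξ) = (1 + ξ·g(ξ))/(1 − ξ)`. -/
noncomputable def hfun (ξ : ℝ) : ℝ := (1 + ξ * gfun ξ) / (1 - ξ)

/-! As functions of `r₀²`, both `γ₀ = r₀² + (ξ(r₀² + a²) − a²)·g` and `γ₁ = (r₀² + a²)(1 − ξ)`
are affine, with slopes `1 + ξ·g` and `1 − ξ`; the ratio of their differences between two
horizons is therefore the ratio of the slopes, which is `h(ξ)`. -/

theorem div_one_add_self_ne_one {K : Type*} [DivisionRing K] (t : K) : t / (1 + t) ≠ 1 := by
  intro h
  have hne : 1 + t ≠ 0 := by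
    rintro h0
    simp [h0] at h
  have : t = 1 + t := (div_eq_one_iff_eq hne).mp h
  simp at this

theorem horizon_trace_eq {K : Type*} [Field K] (r a ξ g : K) (h : r ^ 2 + a ^ 2 ≠ 0) :
    (r ^ 2 + a ^ 2) * ((1 - a ^ 2 / (r ^ 2 + a ^ 2)) + (ξ - a ^ 2 / (r ^ 2 + a ^ 2)) * g) =
      (1 + ξ * g) * r ^ 2 + (ξ - 1) * a ^ 2 * g := by
  field_simp
  ring

theorem stmt_8_general (a Λ re rc : ℝ)
    (hre : 0 < re) (hrc : 0 < rc) (hne : re ≠ rc)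
    (ξ γ0e γ1e γ0c γ1c : ℝ)
    (hξ : ξ = (Λ * a ^ 2 / 3) / (1 + Λ * a ^ 2 / 3))
    (hγ0e : γ0e = (re ^ 2 + a ^ 2) *
      ((1 - a ^ 2 / (re ^ 2 + a ^ 2)) + (ξ - a ^ 2 / (re ^ 2 + a ^ 2)) * gfun ξ))
    (hγ1e : γ1e = (re ^ 2 + a ^ 2) * (1 - ξ))
    (hγ0c : γ0c = (rc ^ 2 + a ^ 2) *
      ((1 - a ^ 2 / (rc ^ 2 + a ^ 2)) + (ξ - a ^ 2 / (rc ^ 2 + a ^ 2)) * gfun ξ))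
    (hγ1c : γ1c = (rc ^ 2 + a ^ 2) * (1 - ξ)) :
    γ1e ≠ γ1c ∧ (γ0e - γ0c) / (γ1e - γ1c) = hfun ξ := by
  have hξ1 : 1 - ξ ≠ 0 := sub_ne_zero.mpr (hξ ▸ div_one_add_self_ne_one _).symm
  have hsq : re ^ 2 - rc ^ 2 ≠ 0 :=
    sub_ne_zero.mpr fun h => hne ((sq_eq_sq₀ hre.le hrc.le).mp h)
  have hγ1 : γ1e - γ1c = (1 - ξ) * (re ^ 2 - rc ^ 2) := by
    rw [hγ1e, hγ1c]
    ring
  have hγ0 : γ0e - γ0c = (1 + ξ * gfun ξ) * (re ^ 2 - rc ^ 2) := by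
    rw [hγ0e, hγ0c, horizon_trace_eq _ _ _ _ (by positivity),
      horizon_trace_eq _ _ _ _ (by positivity)]
    ring
  refine ⟨sub_ne_zero.mp (hγ1 ▸ mul_ne_zero hξ1 hsq), ?_⟩
  rw [hγ0, hγ1, mul_div_mul_right _ _ hsq, hfun]

/-- The ratio of trace differences between the two horizons equals `h(ξ)`. -/
theorem stmt_8 (a Λ re rc : ℝ) (ha : 0 < a) (hΛ : 0 < Λ)
    (hre : 0 < re) (hrc : 0 < rc) (hne : re ≠ rc)
    (ξ γ0e γ1e γ0c γ1c : ℝ)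
    (hξ : ξ = (Λ * a ^ 2 / 3) / (1 + Λ * a ^ 2 / 3))
    (hγ0e : γ0e = (re ^ 2 + a ^ 2) *
      ((1 - a ^ 2 / (re ^ 2 + a ^ 2)) + (ξ - a ^ 2 / (re ^ 2 + a ^ 2)) * gfun ξ))
    (hγ1e : γ1e = (re ^ 2 + a ^ 2) * (1 - ξ))
    (hγ0c : γ0c = (rc ^ 2 + a ^ 2) *
      ((1 - a ^ 2 / (rc ^ 2 + a ^ 2)) + (ξ - a ^ 2 / (rc ^ 2 + a ^ 2)) * gfun ξ))
    (hγ1c : γ1c = (rc ^ 2 + a ^ 2) * (1 - ξ)) :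
    γ1e ≠ γ1c ∧ (γ0e - γ0c) / (γ1e - γ1c) = hfun ξ :=
  stmt_8_general a Λ re rc hre hrc hne ξ γ0e γ1e γ0c γ1c hξ hγ0e hγ1e hγ0c hγ1c
end

section
/- The function h : (0,1) → ℝ defined by h(ξ) = (1 + ξ·g(ξ))/(1 − ξ), where g(ξ) = (√((1−ξ)/ξ)·arctan(√(ξ/(1−ξ))) − 1)/ξ, is strictly monotone increasing on (0,1); in particular h is injective, so ξ is uniquely determined by the value h(ξ). -/
/-!
With `t = √(ξ/(1-ξ))`, i.e. `ξ = t²/(1+t²)`, one has `√((1-ξ)/ξ) = 1/t` and `1/(1-ξ) = 1+t²`,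
so `h(ξ) = (1+t²)·arctan t / t`. The derivative of this function of `t` is
`((t²-1)·arctan t + t)/t² = (t²·arctan t + (t - arctan t))/t²`, which is positive because
`0 < arctan t < t` for `t > 0`. Since `ξ ↦ t` is strictly increasing from `(0,1)` into
`(0,∞)`, `h` is strictly increasing.
-/

open Real Set

theorem Real.arctan_lt_self {x : ℝ} (hx : 0 < x) : arctan x < x := by
  simpa only [tan_arctan] using lt_tan (arctan_pos.mpr hx) (arctan_lt_pi_div_two x)

noncomputable def arctanRatio (t : ℝ) : ℝ := (1 + t ^ 2) * arctan t / t

theorem hasDerivAt_arctanRatio {t : ℝ} (ht : t ≠ 0) :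
    HasDerivAt arctanRatio (((t ^ 2 - 1) * arctan t + t) / t ^ 2) t := by
  have hsq : HasDerivAt (fun t : ℝ => 1 + t ^ 2) (2 * t) t := by
    simpa using (hasDerivAt_pow 2 t).const_add 1
  refine ((hsq.fun_mul (hasDerivAt_arctan t)).fun_div (hasDerivAt_id' t) ht).congr_deriv ?_
  field_simp
  ring

theorem strictMonoOn_arctanRatio : StrictMonoOn arctanRatio (Ioi 0) := by
  refine strictMonoOn_of_hasDerivWithinAt_pos (convex_Ioi 0)
    (fun t ht => (hasDerivAt_arctanRatio (ne_of_gt ht)).continuousAt.continuousWithinAt)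
    (fun t ht => (hasDerivAt_arctanRatio (ne_of_gt (interior_subset ht))).hasDerivWithinAt)
    fun t ht => ?_
  rw [interior_Ioi, mem_Ioi] at ht
  have hnum : (t ^ 2 - 1) * arctan t + t = t ^ 2 * arctan t + (t - arctan t) := by ring
  rw [hnum]
  exact div_pos (add_pos (by positivity) (sub_pos.mpr (arctan_lt_self ht))) (by positivity)

theorem hfun_eq_arctanRatio {ξ : ℝ} (hξ : ξ ∈ Ioo 0 1) :
    hfun ξ = arctanRatio (√(ξ / (1 - ξ))) := by
  obtain ⟨h0, h1⟩ := hξ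
  have h1' : 0 < 1 - ξ := by linarith
  set t := √(ξ / (1 - ξ)) with ht
  have ht_sq : t ^ 2 = ξ / (1 - ξ) := sq_sqrt (by positivity)
  have hinv : √((1 - ξ) / ξ) = t⁻¹ := by rw [ht, ← sqrt_inv, inv_div]
  rw [hfun, gfun, hinv, arctanRatio, ht_sq]
  field_simp
  ring

theorem strictMonoOn_sqrt_div_one_sub :
    StrictMonoOn (fun ξ : ℝ => √(ξ / (1 - ξ))) (Ioo 0 1) := by
  intro a ha b hb hab
  have ha' : 0 < 1 - a := by linarith [ha.2]
  have hb' : 0 < 1 - b := by linarith [hb.2]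
  refine sqrt_lt_sqrt (div_pos ha.1 ha').le ?_
  rw [div_lt_div_iff₀ ha' hb']
  nlinarith

/-- `h` is strictly monotone increasing on `(0,1)`; in particular it is injective there,
so `ξ` is uniquely determined by the value `h(ξ)`. -/
theorem stmt_9 :
    StrictMonoOn hfun (Set.Ioo (0 : ℝ) 1) ∧ Set.InjOn hfun (Set.Ioo (0 : ℝ) 1) := by
  have hmaps : MapsTo (fun ξ : ℝ => √(ξ / (1 - ξ))) (Ioo 0 1) (Ioi 0) :=
    fun ξ hξ => sqrt_pos.mpr (div_pos hξ.1 (sub_pos.mpr hξ.2))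
  have hmono : StrictMonoOn hfun (Ioo 0 1) :=
    (strictMonoOn_arctanRatio.comp strictMonoOn_sqrt_div_one_sub hmaps).congr
      fun ξ hξ => (hfun_eq_arctanRatio hξ).symm
  exact ⟨hmono, hmono.injOn⟩
end

section
/- Let a, Λ > 0 and r_e, r_c > 0 with r_e ≠ r_c. Set χ = 1 + Λa²/3, ξ = (Λa²/3)/χ, g(ξ) = (√((1−ξ)/ξ)·arctan(√(ξ/(1−ξ))) − 1)/ξ, and for r₀ ∈ {r_e, r_c} define η² = r₀²+a², β² = a²/η², γ₀(r₀) = η²[(1−β²)+(ξ−β²)g(ξ)], γ₁(r₀) = η²(1−ξ). Writing γ₀ᵉ = γ₀(r_e), γ₁ᵉ = γ₁(r_e), γ₀ᶜ = γ₀(r_c), γ₁ᶜ = γ₁(r_c), one has γ₁ᶜγ₀ᵉ − γ₁ᵉγ₀ᶜ = (1−ξ)(1+g(ξ))·a²·(r_e² − r_c²); in particular, if additionally 1+g(ξ) > 0 then γ₁ᶜγ₀ᵉ − γ₁ᵉγ₀ᶜ ≠ 0. -/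
/-
Clearing the denominator `η²` turns `γ₀` into the affine expression `(η² − a²) + (η²ξ − a²)g`,
and `γ₁ = η²(1 − ξ)` is linear in `η²`. In the cross combination the terms in `η²_e η²_c` cancel,
leaving `(1 − ξ)(1 + g)a²(η²_e − η²_c)`, and `η²_e − η²_c = r_e² − r_c²`. Nonvanishing follows
since `ξ = x/(1 + x) < 1` for `x = Λa²/3 ≥ 0`, `a ≠ 0`, and `r ↦ r²` is injective on `r > 0`.
-/

lemma mul_one_sub_div_add_sub_div_mul {s b ξ g : ℝ} (hs : s ≠ 0) :
    s * ((1 - b / s) + (ξ - b / s) * g) = (s - b) + (s * ξ - b) * g := by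
  field_simp

lemma cross_trace_eq (e c b ξ g : ℝ) :
    c * (1 - ξ) * ((e - b) + (e * ξ - b) * g) - e * (1 - ξ) * ((c - b) + (c * ξ - b) * g) =
      (1 - ξ) * (1 + g) * b * (e - c) := by
  ring

lemma div_one_add_self_lt_one {x : ℝ} (hx : 0 ≤ x) : x / (1 + x) < 1 := by
  rw [div_lt_one (by linarith)]
  linarith

/-- The denominator of the spectral formula for the cosmological constant:
`γ₁ᶜγ₀ᵉ − γ₁ᵉγ₀ᶜ = (1−ξ)(1+g(ξ))·a²·(r_e² − r_c²)`, which is nonzero when `1+g(ξ) > 0`. -/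
theorem stmt_12 (a Λ re rc : ℝ) (ha : 0 < a) (hΛ : 0 < Λ)
    (hre : 0 < re) (hrc : 0 < rc) (hne : re ≠ rc)
    (χ ξ γ0e γ1e γ0c γ1c : ℝ)
    (hχ : χ = 1 + Λ * a ^ 2 / 3) (hξ : ξ = (Λ * a ^ 2 / 3) / χ)
    (hγ0e : γ0e = (re ^ 2 + a ^ 2) *
      ((1 - a ^ 2 / (re ^ 2 + a ^ 2)) + (ξ - a ^ 2 / (re ^ 2 + a ^ 2)) * gfun ξ))
    (hγ1e : γ1e = (re ^ 2 + a ^ 2) * (1 - ξ))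
    (hγ0c : γ0c = (rc ^ 2 + a ^ 2) *
      ((1 - a ^ 2 / (rc ^ 2 + a ^ 2)) + (ξ - a ^ 2 / (rc ^ 2 + a ^ 2)) * gfun ξ))
    (hγ1c : γ1c = (rc ^ 2 + a ^ 2) * (1 - ξ)) :
    γ1c * γ0e - γ1e * γ0c = (1 - ξ) * (1 + gfun ξ) * a ^ 2 * (re ^ 2 - rc ^ 2) ∧
      (0 < 1 + gfun ξ → γ1c * γ0e - γ1e * γ0c ≠ 0) := by
  have hηe : re ^ 2 + a ^ 2 ≠ 0 := by positivity
  have hηc : rc ^ 2 + a ^ 2 ≠ 0 := by positivity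
  have hcross : γ1c * γ0e - γ1e * γ0c = (1 - ξ) * (1 + gfun ξ) * a ^ 2 * (re ^ 2 - rc ^ 2) := by
    rw [hγ0e, hγ1e, hγ0c, hγ1c, mul_one_sub_div_add_sub_div_mul hηe,
      mul_one_sub_div_add_sub_div_mul hηc, cross_trace_eq]
    ring
  refine ⟨hcross, fun hg => ?_⟩
  have hξ1 : ξ < 1 := by
    rw [hξ, hχ]
    exact div_one_add_self_lt_one (by positivity)
  have hsq : re ^ 2 - rc ^ 2 ≠ 0 :=
    sub_ne_zero.2 fun h => hne ((pow_left_inj₀ hre.le hrc.le two_ne_zero).1 h)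
  rw [hcross]
  exact mul_ne_zero (mul_pos (mul_pos (sub_pos.2 hξ1) hg) (pow_pos ha 2)).ne' hsq
end

section
/- Let a, Λ > 0 and r_e, r_c > 0 with r_e ≠ r_c. With ξ = (Λa²/3)/(1+Λa²/3), g(ξ) = (√((1−ξ)/ξ)·arctan(√(ξ/(1−ξ))) − 1)/ξ, and trace quantities γ₀(r₀) = η²[(1−β²)+(ξ−β²)g(ξ)], γ₁(r₀) = η²(1−ξ) (η² = r₀²+a², β² = a²/η²) for r₀ ∈ {r_e, r_c}, writing γ₀ᵉ, γ₁ᵉ, γ₀ᶜ, γ₁ᶜ for the traces at r_e and r_c respectively, the angular momentum parameter satisfies a² = (ξ/(1−ξ))·(γ₁ᶜγ₀ᵉ − γ₁ᵉγ₀ᶜ)/(γ₀ᵉ − γ₁ᵉ + γ₁ᶜ − γ₀ᶜ). -/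
open Real

section Traces

variable (A ξ G : ℝ)

/- The traces `γ₀`, `γ₁` at a horizon with `r₀² = p`, where `A = a²` and `G = g(ξ)`. -/
def traceGamma0 (p : ℝ) : ℝ := p + (ξ * (p + A) - A) * G

def traceGamma1 (p : ℝ) : ℝ := (p + A) * (1 - ξ)

variable {p q : ℝ}

theorem traceGamma0_eq_of_ne_zero {r a : ℝ} (h : r ^ 2 + a ^ 2 ≠ 0) :
    (r ^ 2 + a ^ 2) * ((1 - a ^ 2 / (r ^ 2 + a ^ 2)) + (ξ - a ^ 2 / (r ^ 2 + a ^ 2)) * G) =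
      traceGamma0 (a ^ 2) ξ G (r ^ 2) := by
  unfold traceGamma0
  field_simp
  ring

theorem traceGamma_cross :
    traceGamma1 A ξ q * traceGamma0 A ξ G p - traceGamma1 A ξ p * traceGamma0 A ξ G q =
      (1 - ξ) * A * ((p - q) * (1 + G)) := by
  unfold traceGamma0 traceGamma1
  ring

theorem traceGamma_diff :
    traceGamma0 A ξ G p - traceGamma1 A ξ p + traceGamma1 A ξ q - traceGamma0 A ξ G q =
      ξ * ((p - q) * (1 + G)) := by
  unfold traceGamma0 traceGamma1
  ring

variable {A ξ G}

theorem eq_div_of_traceGamma (hξ0 : ξ ≠ 0) (hξ1 : ξ ≠ 1) (hG : 1 + G ≠ 0) (hpq : p ≠ q) :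
    A = ξ / (1 - ξ) *
      ((traceGamma1 A ξ q * traceGamma0 A ξ G p - traceGamma1 A ξ p * traceGamma0 A ξ G q) /
        (traceGamma0 A ξ G p - traceGamma1 A ξ p + traceGamma1 A ξ q - traceGamma0 A ξ G q)) := by
  have hξ1' : 1 - ξ ≠ 0 := sub_ne_zero.2 (Ne.symm hξ1)
  have hpqG : (p - q) * (1 + G) ≠ 0 := mul_ne_zero (sub_ne_zero.2 hpq) hG
  rw [traceGamma_cross, traceGamma_diff, mul_div_mul_right _ _ hpqG]
  field_simp

end Traces

/-- Spectral formula for the angular momentum parameter: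
`a² = (ξ/(1−ξ))·(γ₁ᶜγ₀ᵉ − γ₁ᵉγ₀ᶜ)/(γ₀ᵉ − γ₁ᵉ + γ₁ᶜ − γ₀ᶜ)`. -/
theorem stmt_14 (a Λ re rc : ℝ) (ha : 0 < a) (hΛ : 0 < Λ)
    (hre : 0 < re) (hrc : 0 < rc) (hne : re ≠ rc)
    (ξ γ0e γ1e γ0c γ1c : ℝ)
    (hξ : ξ = (Λ * a ^ 2 / 3) / (1 + Λ * a ^ 2 / 3))
    (hγ0e : γ0e = (re ^ 2 + a ^ 2) *
      ((1 - a ^ 2 / (re ^ 2 + a ^ 2)) + (ξ - a ^ 2 / (re ^ 2 + a ^ 2)) * gfun ξ))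
    (hγ1e : γ1e = (re ^ 2 + a ^ 2) * (1 - ξ))
    (hγ0c : γ0c = (rc ^ 2 + a ^ 2) *
      ((1 - a ^ 2 / (rc ^ 2 + a ^ 2)) + (ξ - a ^ 2 / (rc ^ 2 + a ^ 2)) * gfun ξ))
    (hγ1c : γ1c = (rc ^ 2 + a ^ 2) * (1 - ξ)) :
    a ^ 2 = (ξ / (1 - ξ)) *
      ((γ1c * γ0e - γ1e * γ0c) / (γ0e - γ1e + γ1c - γ0c)) := by
  have hx : 0 < Λ * a ^ 2 / 3 := by positivity
  have hξ0 : 0 < ξ := hξ ▸ by positivity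
  have hξ1 : ξ < 1 := hξ ▸ (div_lt_one (by positivity)).2 (by linarith)
  have hsq : re ^ 2 ≠ rc ^ 2 := fun h => hne ((pow_left_inj₀ hre.le hrc.le two_ne_zero).1 h)
  rw [traceGamma0_eq_of_ne_zero ξ (gfun ξ) (by positivity : re ^ 2 + a ^ 2 ≠ 0)] at hγ0e
  rw [traceGamma0_eq_of_ne_zero ξ (gfun ξ) (by positivity : rc ^ 2 + a ^ 2 ≠ 0)] at hγ0c
  subst hγ0e hγ1e hγ0c hγ1c
  exact eq_div_of_traceGamma hξ0.ne' hξ1.ne (one_add_gfun_pos hξ0 hξ1).ne' hsq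
end
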